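/- arXiv:2407.17534 — 2 statements merged into one kernel-verified Lean document; each statement's English description precedes it below -/
import Mathlib

section
/- Let r be a positive natural number, let w ∈ ℝ^r with w ≠ 0, let π ∈ (0,1), and let p₁, p₂ > 0. Define f : ℝ^r → ℝ by f(v) = π · p₁ · log(1 + exp(−(1−π)⟨v, w⟩)) + (1−π) · p₂ · log(1 + exp(π⟨v, w⟩)), where ⟨·,·⟩ is the Euclidean inner product. If v̂ ∈ ℝ^r is a critical point of f (i.e., the Fréchet derivative of f at v̂ is zero; in particular if v̂ minimizes f), then log(p₁/p₂) = ⟨v̂, w⟩ + log((1 + exp(−(1−π)⟨v̂, w⟩))/(1 + exp(π⟨v̂, w⟩))). -/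
/-!
The loss depends on `v` only through the linear predictor `t = ⟪v, w⟫`, so (as `w ≠ 0`) a critical
point `v̂` makes the scalar derivative vanish at `t = ⟪v̂, w⟫`. Since `log (1 + exp x)` has derivative
`sigmoid x`, that derivative is `π (1 - π) (p₂ σ(π t) - p₁ σ(-(1 - π) t))`, so
`p₁ / p₂ = σ(π t) / σ(-(1 - π) t)`, and `σ b / σ a = exp (b - a) (1 + exp a) / (1 + exp b)`.
-/

namespace Real

lemma hasDerivAt_log_one_add_exp (x : ℝ) :
    HasDerivAt (fun x => log (1 + exp x)) (sigmoid x) x := by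
  convert ((hasDerivAt_exp x).const_add 1).log (by positivity) using 1
  rw [sigmoid_def, exp_neg]
  field_simp
  ring

lemma sigmoid_div_sigmoid (a b : ℝ) :
    sigmoid b / sigmoid a = exp (b - a) * ((1 + exp a) / (1 + exp b)) := by
  simp only [sigmoid_def, exp_neg, exp_sub]
  field_simp
  ring

lemma log_div_eq_of_mul_sigmoid_eq {p₁ p₂ a b : ℝ} (hp₂ : p₂ ≠ 0)
    (h : p₁ * sigmoid a = p₂ * sigmoid b) :
    log (p₁ / p₂) = b - a + log ((1 + exp a) / (1 + exp b)) := by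
  have hratio : p₁ / p₂ = sigmoid b / sigmoid a := by
    rw [div_eq_div_iff hp₂ (sigmoid_pos a).ne']
    linarith
  rw [hratio, sigmoid_div_sigmoid, log_mul (exp_pos _).ne' (by positivity), log_exp]

end Real

open Real (exp log sigmoid)
open scoped RealInnerProductSpace

noncomputable def aLearnerLoss (π p₁ p₂ t : ℝ) : ℝ :=
  π * p₁ * log (1 + exp (-((1 - π) * t))) + (1 - π) * p₂ * log (1 + exp (π * t))

lemma hasDerivAt_aLearnerLoss (π p₁ p₂ t : ℝ) :
    HasDerivAt (aLearnerLoss π p₁ p₂)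
      (π * (1 - π) * (p₂ * sigmoid (π * t) - p₁ * sigmoid (-((1 - π) * t)))) t := by
  have hneg : HasDerivAt (fun t => -((1 - π) * t)) (-(1 - π)) t := by
    simpa [Pi.neg_def] using ((hasDerivAt_id t).const_mul (1 - π)).neg
  have hpos : HasDerivAt (fun t => π * t) π t := by
    simpa using (hasDerivAt_id t).const_mul π
  have hsum := (((Real.hasDerivAt_log_one_add_exp _).comp t hneg).const_mul (π * p₁)).add
    (((Real.hasDerivAt_log_one_add_exp _).comp t hpos).const_mul ((1 - π) * p₂))
  exact hsum.congr_deriv (by ring)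

lemma HasDerivAt.eq_zero_of_fderiv_comp_inner_eq_zero {E : Type*} [NormedAddCommGroup E]
    [InnerProductSpace ℝ E] {g : ℝ → ℝ} {g' : ℝ} {v w : E} (hw : w ≠ 0)
    (hg : HasDerivAt g g' ⟪v, w⟫) (h : fderiv ℝ (fun u => g ⟪u, w⟫) v = 0) : g' = 0 := by
  have hinner : ∀ u, innerSL ℝ w u = ⟪u, w⟫ := fun u => real_inner_comm u w
  have hcomp : HasFDerivAt (fun u => g ⟪u, w⟫) (g' • innerSL ℝ w) v := by
    rw [← hinner] at hg
    simpa only [Function.comp_def, hinner] using hg.comp_hasFDerivAt v (innerSL ℝ w).hasFDerivAt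
  have hw' := congrArg (· w) (hcomp.fderiv.symm.trans h)
  simpa [hinner, hw] using hw'

theorem stmt_5_general (r : ℕ)
    (w : EuclideanSpace ℝ (Fin r)) (hw : w ≠ 0)
    (π : ℝ) (hπ₀ : 0 < π) (hπ₁ : π < 1)
    (p₁ p₂ : ℝ) (hp₂ : 0 < p₂)
    (f : EuclideanSpace ℝ (Fin r) → ℝ)
    (hf : f = fun v => π * p₁ * Real.log (1 + Real.exp (-((1 - π) * ⟪v, w⟫))) +
                       (1 - π) * p₂ * Real.log (1 + Real.exp (π * ⟪v, w⟫)))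
    (vhat : EuclideanSpace ℝ (Fin r))
    (hcrit : fderiv ℝ f vhat = 0) :
    Real.log (p₁ / p₂) =
      ⟪vhat, w⟫ + Real.log ((1 + Real.exp (-((1 - π) * ⟪vhat, w⟫))) /
                            (1 + Real.exp (π * ⟪vhat, w⟫))) := by
  have hf' : f = fun v => aLearnerLoss π p₁ p₂ ⟪v, w⟫ := hf
  have hderiv := (hasDerivAt_aLearnerLoss π p₁ p₂ ⟪vhat, w⟫).eq_zero_of_fderiv_comp_inner_eq_zero
    hw (hf' ▸ hcrit)
  have hbalance : p₁ * sigmoid (-((1 - π) * ⟪vhat, w⟫)) = p₂ * sigmoid (π * ⟪vhat, w⟫) := by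
    have hπ : π * (1 - π) ≠ 0 := mul_ne_zero hπ₀.ne' (sub_ne_zero.2 hπ₁.ne')
    linarith [(mul_eq_zero.1 hderiv).resolve_left hπ]
  rw [Real.log_div_eq_of_mul_sigmoid_eq hp₂.ne' hbalance]
  ring

theorem stmt_5 (r : ℕ) (hr : 0 < r)
    (w : EuclideanSpace ℝ (Fin r)) (hw : w ≠ 0)
    (π : ℝ) (hπ₀ : 0 < π) (hπ₁ : π < 1)
    (p₁ p₂ : ℝ) (hp₁ : 0 < p₁) (hp₂ : 0 < p₂)
    (f : EuclideanSpace ℝ (Fin r) → ℝ)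
    (hf : f = fun v => π * p₁ * Real.log (1 + Real.exp (-((1 - π) * ⟪v, w⟫))) +
                       (1 - π) * p₂ * Real.log (1 + Real.exp (π * ⟪v, w⟫)))
    (vhat : EuclideanSpace ℝ (Fin r))
    (hcrit : fderiv ℝ f vhat = 0) :
    Real.log (p₁ / p₂) =
      ⟪vhat, w⟫ + Real.log ((1 + Real.exp (-((1 - π) * ⟪vhat, w⟫))) /
                            (1 + Real.exp (π * ⟪vhat, w⟫))) :=
  stmt_5_general r w hw π hπ₀ hπ₁ p₁ p₂ hp₂ f hf vhat hcrit
end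

section
/- Let n, m, p, r be positive natural numbers. Let Y be an n × m real matrix with all entries in {0,1}, let X be an n × p real matrix, let t ∈ ℝ^n with t_i ∈ {−1, 1} for all i, let T = diag(t), and let a ∈ ℝ^n with a_i > 0 for all i, with A = diag(a). For V an m × r real matrix and W a p × r real matrix define L_W(V, W) = Σ_{i=1}^n Σ_{j=1}^m a_i · Y_{ij} · log(1 + exp(−(T X W Vᵀ)_{ij})). Fix supporting matrices V⁰ (m × r) and W⁰ (p × r), let Φ be the n × m matrix with Φ_{ij} = exp(−(T X W⁰ V⁰ᵀ)_{ij}) / (1 + exp(−(T X W⁰ V⁰ᵀ)_{ij})), and set Z = T X W⁰ V⁰ᵀ + 4 (Y ⊙ Φ), where ⊙ is the entrywise (Hadamard) product. Then for all m × r matrices V and p × r matrices W: L_W(V, W) − L_W(V⁰, W⁰) ≤ (1/8) · ( Σ_{i,j} a_i (Z − T X W Vᵀ)_{ij}² − Σ_{i,j} a_i (Z − T X W⁰ V⁰ᵀ)_{ij}² ). -/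
/-!
The logistic loss `ℓ(y) = log (1 + exp (-y))` has `ℓ'' = σ (1 - σ) ≤ 1/4`, where `σ` is the
sigmoid, so `y ↦ y² / 8 - ℓ y` is convex and lies above its tangent lines. This gives the
quadratic upper bound `ℓ x ≤ ℓ x₀ - φ (x - x₀) + (x - x₀)² / 8` with `φ = exp (-x₀) / (1 + exp (-x₀))`,
and completing the square, using `Y ∈ {0, 1}` and `a > 0`, turns the weighted sum of these
bounds into the weighted least-squares function in the working response `Z`.
-/

open Real Set

lemma ConvexOn.add_mul_sub_le_of_hasDerivAt {f : ℝ → ℝ} {f' x : ℝ} (hf : ConvexOn ℝ univ f)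
    (hfx : HasDerivAt f f' x) (y : ℝ) : f x + f' * (y - x) ≤ f y := by
  rcases lt_trichotomy x y with hxy | rfl | hyx
  · have h := hf.le_slope_of_hasDerivAt (mem_univ x) (mem_univ y) hxy hfx
    rw [slope_def_field, le_div_iff₀ (sub_pos.mpr hxy)] at h
    linarith
  · simp
  · have h := hf.slope_le_of_hasDerivAt (mem_univ y) (mem_univ x) hyx hfx
    rw [slope_def_field, div_le_iff₀ (sub_pos.mpr hyx)] at h
    linarith

/-- The descent lemma, with the curvature bound `f'' ≤ L` phrased as monotonicity of
`L y - f' y`, so that no second derivative is needed. -/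
lemma le_add_deriv_mul_add_sq_of_monotone {f f' : ℝ → ℝ} {L : ℝ}
    (hf : ∀ y, HasDerivAt f (f' y) y) (hmono : Monotone fun y => L * y - f' y) (x y : ℝ) :
    f y ≤ f x + f' x * (y - x) + L / 2 * (y - x) ^ 2 := by
  have hg : ∀ y, HasDerivAt (fun y => L / 2 * y ^ 2 - f y) (L * y - f' y) y := fun y =>
    (((hasDerivAt_pow 2 y).const_mul (L / 2)).sub (hf y)).congr_deriv (by push_cast; ring)
  have hconv : ConvexOn ℝ univ fun y => L / 2 * y ^ 2 - f y :=
    Monotone.convexOn_univ_of_deriv (fun y => (hg y).differentiableAt)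
      (by rwa [funext fun y => (hg y).deriv])
  have := hconv.add_mul_sub_le_of_hasDerivAt (hg x) y
  nlinarith

lemma hasDerivAt_log_one_add_exp_neg (y : ℝ) :
    HasDerivAt (fun y => log (1 + exp (-y))) (sigmoid y - 1) y := by
  convert ((hasDerivAt_neg' y).exp.const_add 1).log (by positivity) using 1
  rw [sigmoid_def]
  field_simp
  ring

lemma monotone_quarter_mul_sub_sigmoid : Monotone fun y => 1 / 4 * y - (sigmoid y - 1) := by
  have hd : ∀ y, HasDerivAt (fun y => 1 / 4 * y - (sigmoid y - 1))
      (1 / 4 - sigmoid y * (1 - sigmoid y)) y := fun y =>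
    (((hasDerivAt_id y).const_mul (1 / 4)).sub ((hasDerivAt_sigmoid y).sub_const 1)).congr_deriv
      (by ring)
  refine monotone_of_deriv_nonneg (fun y => (hd y).differentiableAt) fun y => ?_
  rw [(hd y).deriv]
  nlinarith [sq_nonneg (2 * sigmoid y - 1)]

lemma log_one_add_exp_neg_le (x₀ x : ℝ) :
    log (1 + exp (-x)) ≤
      log (1 + exp (-x₀)) - exp (-x₀) / (1 + exp (-x₀)) * (x - x₀) + (x - x₀) ^ 2 / 8 := by
  have h := le_add_deriv_mul_add_sq_of_monotone hasDerivAt_log_one_add_exp_neg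
    monotone_quarter_mul_sub_sigmoid x₀ x
  have hφ : exp (-x₀) / (1 + exp (-x₀)) = 1 - sigmoid x₀ := by
    rw [← sigmoid_neg, ← sigmoid_mul_rexp_neg, sigmoid_def, div_eq_inv_mul]
  rw [hφ]
  linarith

/-- The entrywise majorization: `x₀ + 4 y φ` is the working response at the support point. -/
lemma mul_log_one_add_exp_neg_sub_le {a y x₀ x : ℝ} (ha : 0 ≤ a) (hy₀ : 0 ≤ y) (hy₁ : y ≤ 1) :
    a * y * log (1 + exp (-x)) - a * y * log (1 + exp (-x₀)) ≤
      1 / 8 * (a * (x₀ + 4 * (y * (exp (-x₀) / (1 + exp (-x₀)))) - x) ^ 2 -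
        a * (x₀ + 4 * (y * (exp (-x₀) / (1 + exp (-x₀)))) - x₀) ^ 2) := by
  have h := mul_le_mul_of_nonneg_left (log_one_add_exp_neg_le x₀ x) (mul_nonneg ha hy₀)
  have hsq : a * y * (x - x₀) ^ 2 ≤ a * (x - x₀) ^ 2 :=
    mul_le_mul_of_nonneg_right (mul_le_of_le_one_right ha hy₁) (sq_nonneg _)
  nlinarith

open Matrix

theorem stmt_12_general (n m p r : ℕ)
    (Y : Matrix (Fin n) (Fin m) ℝ) (hY : ∀ i j, Y i j = 0 ∨ Y i j = 1)
    (X : Matrix (Fin n) (Fin p) ℝ)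
    (T : Matrix (Fin n) (Fin n) ℝ)
    (a : Fin n → ℝ) (ha : ∀ i, 0 < a i)
    (LW : Matrix (Fin m) (Fin r) ℝ → Matrix (Fin p) (Fin r) ℝ → ℝ)
    (hLW : LW = fun V W =>
      ∑ i, ∑ j, a i * Y i j * Real.log (1 + Real.exp (-((T * X * W * Vᵀ) i j))))
    (V₀ : Matrix (Fin m) (Fin r) ℝ) (W₀ : Matrix (Fin p) (Fin r) ℝ)
    (Φ : Matrix (Fin n) (Fin m) ℝ)
    (hΦ : ∀ i j, Φ i j = Real.exp (-((T * X * W₀ * V₀ᵀ) i j)) /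
                          (1 + Real.exp (-((T * X * W₀ * V₀ᵀ) i j))))
    (Z : Matrix (Fin n) (Fin m) ℝ)
    (hZ : Z = T * X * W₀ * V₀ᵀ + 4 • (Y ⊙ Φ)) :
    ∀ (V : Matrix (Fin m) (Fin r) ℝ) (W : Matrix (Fin p) (Fin r) ℝ),
      LW V W - LW V₀ W₀ ≤
        (1 / 8) * ((∑ i, ∑ j, a i * ((Z - T * X * W * Vᵀ) i j) ^ 2) -
                   (∑ i, ∑ j, a i * ((Z - T * X * W₀ * V₀ᵀ) i j) ^ 2)) := by
  intro V W
  subst hLW hZ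
  simp only [← Finset.sum_sub_distrib, Finset.mul_sum]
  gcongr with i _ j _
  have hY₀₁ : 0 ≤ Y i j ∧ Y i j ≤ 1 := by rcases hY i j with h | h <;> simp [h]
  simp only [Matrix.sub_apply, Matrix.add_apply, Matrix.smul_apply, hadamard_apply, hΦ,
    nsmul_eq_mul, Nat.cast_ofNat]
  exact mul_log_one_add_exp_neg_sub_le (ha i).le hY₀₁.1 hY₀₁.2

theorem stmt_12 (n m p r : ℕ) (hn : 0 < n) (hm : 0 < m) (hp : 0 < p) (hr : 0 < r)
    (Y : Matrix (Fin n) (Fin m) ℝ) (hY : ∀ i j, Y i j = 0 ∨ Y i j = 1)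
    (X : Matrix (Fin n) (Fin p) ℝ)
    (t : Fin n → ℝ) (ht : ∀ i, t i = -1 ∨ t i = 1)
    (T : Matrix (Fin n) (Fin n) ℝ) (hT : T = Matrix.diagonal t)
    (a : Fin n → ℝ) (ha : ∀ i, 0 < a i)
    (A : Matrix (Fin n) (Fin n) ℝ) (hA : A = Matrix.diagonal a)
    (LW : Matrix (Fin m) (Fin r) ℝ → Matrix (Fin p) (Fin r) ℝ → ℝ)
    (hLW : LW = fun V W =>
      ∑ i, ∑ j, a i * Y i j * Real.log (1 + Real.exp (-((T * X * W * Vᵀ) i j))))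
    (V₀ : Matrix (Fin m) (Fin r) ℝ) (W₀ : Matrix (Fin p) (Fin r) ℝ)
    (Φ : Matrix (Fin n) (Fin m) ℝ)
    (hΦ : ∀ i j, Φ i j = Real.exp (-((T * X * W₀ * V₀ᵀ) i j)) /
                          (1 + Real.exp (-((T * X * W₀ * V₀ᵀ) i j))))
    (Z : Matrix (Fin n) (Fin m) ℝ)
    (hZ : Z = T * X * W₀ * V₀ᵀ + 4 • (Y ⊙ Φ)) :
    ∀ (V : Matrix (Fin m) (Fin r) ℝ) (W : Matrix (Fin p) (Fin r) ℝ),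
      LW V W - LW V₀ W₀ ≤
        (1 / 8) * ((∑ i, ∑ j, a i * ((Z - T * X * W * Vᵀ) i j) ^ 2) -
                   (∑ i, ∑ j, a i * ((Z - T * X * W₀ * V₀ᵀ) i j) ^ 2)) :=
  stmt_12_general n m p r Y hY X T a ha LW hLW V₀ W₀ Φ hΦ Z hZ
end
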